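/- For any Riemannian metric g, any symmetric tensor K with associated P^{kl} := g^{kl} tr_g K − K^{kl}, any function V and vector field Y, one has the divergence identity 2 D_l(Y^k P^l_k) = P^{kl} Å_{kl} + Y^k J_k(g,K) + P^{kl}( 2V K̊_{kl} + L_Y e_{kl} ), where Å_{kl} := L_Y b_{kl} − 2V K̊_{kl} and e_{kl} := g_{kl} − b_{kl}. -/

import Mathlib

/-!
Statement 2 (Chruściel–Jezierski–Łęski, eq. (divYPg)): for any Riemannian metric `g`,
symmetric tensor `K` with `P^{kl} := g^{kl} tr_g K − K^{kl}`, any function `V` and vector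
field `Y`, one has the divergence identity

  `2 D_l(Y^k P^l{}_k) = P^{kl} Å_{kl} + Y^k J_k(g,K) + P^{kl}(2V K̊_{kl} + (L_Y e)_{kl})`,

where `Å_{kl} := (L_Y b)_{kl} − 2V K̊_{kl}` and `e_{kl} := g_{kl} − b_{kl}`.
-/

open scoped BigOperators
open Real

noncomputable section

/-- Points of an `n`-dimensional coordinate chart. -/
abbrev Pt (n : ℕ) := EuclideanSpace ℝ (Fin n)

/-- A two-index tensor field in coordinates. -/
abbrev T2 (n : ℕ) := Pt n → Fin n → Fin n → ℝ

/-- A vector field in coordinates. -/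
abbrev Vec (n : ℕ) := Pt n → Fin n → ℝ

variable {n : ℕ}

/-- Partial derivative `∂_i f`. -/
def pd (i : Fin n) (f : Pt n → ℝ) (x : Pt n) : ℝ :=
  fderiv ℝ f x (EuclideanSpace.single i 1)

/-- Components `g^{ij}` of the inverse metric. -/
def inv2 (g : T2 n) (x : Pt n) (i j : Fin n) : ℝ :=
  (Matrix.of (g x))⁻¹ i j

/-- Christoffel symbols `Γ^k_{ij}` of the metric `g`. -/
def chr (g : T2 n) (k i j : Fin n) (x : Pt n) : ℝ :=
  (1 / 2) * ∑ l, inv2 g x k l *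
    (pd i (fun y => g y l j) x + pd j (fun y => g y l i) x - pd l (fun y => g y i j) x)

/-- `tr_g K`. -/
def trK (g K : T2 n) (x : Pt n) : ℝ := ∑ i, ∑ j, inv2 g x i j * K x i j

/-- `K^{kl}` (indices raised with `g`). -/
def Kup (g K : T2 n) (x : Pt n) (k l : Fin n) : ℝ :=
  ∑ m, ∑ m', inv2 g x k m * inv2 g x l m' * K x m m'

/-- `P^{kl} := g^{kl} tr_g K − K^{kl}`. -/
def Pup (g K : T2 n) (x : Pt n) (k l : Fin n) : ℝ :=
  inv2 g x k l * trK g K x - Kup g K x k l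

/-- Mixed components `P^l{}_k := δ^l_k tr_g K − K^l{}_k`. -/
def Pmix (g K : T2 n) (x : Pt n) (l k : Fin n) : ℝ :=
  (if l = k then trK g K x else 0) - ∑ m, inv2 g x l m * K x m k

/-- `J_k(g,K) := 2 D_l P^l{}_k`, i.e. `J_k(g,K)/(−2) = D_l(K^l{}_k − δ^l_k tr_g K)`. -/
def Jlow (g K : T2 n) (k : Fin n) (x : Pt n) : ℝ :=
  2 * ((∑ l, pd l (fun y => Pmix g K y l k) x)
    + (∑ l, ∑ m, chr g l l m x * Pmix g K x m k)
    - ∑ l, ∑ m, chr g m l k x * Pmix g K x l m)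

/-- Lie derivative `(L_Y T)_{kl}` of a covariant two-tensor. -/
def lieLow (Y : Vec n) (T : T2 n) (x : Pt n) (k l : Fin n) : ℝ :=
  (∑ m, Y x m * pd m (fun y => T y k l) x)
    + (∑ m, T x m l * pd k (fun y => Y y m) x)
    + ∑ m, T x k m * pd l (fun y => Y y m) x

/-- `e_{kl} := g_{kl} − b_{kl}`. -/
def eT (g b : T2 n) : T2 n := fun x i j => g x i j - b x i j

/-- `Å_{kl} := (L_Y b)_{kl} − 2 V K̊_{kl}`. -/
def Aring (b Kr : T2 n) (V : Pt n → ℝ) (Y : Vec n) (x : Pt n) (k l : Fin n) : ℝ :=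
  lieLow Y b x k l - 2 * V x * Kr x k l

/-- Covariant divergence `D_l Z^l` (for the Levi-Civita connection of `g`) of a vector field. -/
def divg (g : T2 n) (Z : Vec n) (x : Pt n) : ℝ :=
  (∑ l, pd l (fun y => Z y l) x) + ∑ l, ∑ m, chr g l l m x * Z x m

lemma pd_congr {i : Fin n} {f f' : Pt n → ℝ} (h : ∀ y, f y = f' y) (x : Pt n) :
    pd i f x = pd i f' x := by
  have : f = f' := funext h
  rw [this]
lemma pd_add {i : Fin n} {f g : Pt n → ℝ} {x : Pt n}
    (hf : DifferentiableAt ℝ f x) (hg : DifferentiableAt ℝ g x) :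
    pd i (fun y => f y + g y) x = pd i f x + pd i g x := by
  unfold pd
  rw [fderiv_fun_add hf hg]; rfl
lemma pd_sub {i : Fin n} {f g : Pt n → ℝ} {x : Pt n}
    (hf : DifferentiableAt ℝ f x) (hg : DifferentiableAt ℝ g x) :
    pd i (fun y => f y - g y) x = pd i f x - pd i g x := by
  unfold pd
  rw [fderiv_fun_sub hf hg]; rfl
lemma pd_mul {i : Fin n} {f g : Pt n → ℝ} {x : Pt n}
    (hf : DifferentiableAt ℝ f x) (hg : DifferentiableAt ℝ g x) :
    pd i (fun y => f y * g y) x = pd i f x * g x + f x * pd i g x := by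
  unfold pd
  rw [fderiv_fun_mul hf hg]
  simp only [ContinuousLinearMap.add_apply, ContinuousLinearMap.smul_apply, smul_eq_mul]
  ring
lemma pd_sum {i : Fin n} {ι : Type*} {s : Finset ι} {f : ι → Pt n → ℝ} {x : Pt n}
    (hf : ∀ k ∈ s, DifferentiableAt ℝ (f k) x) :
    pd i (fun y => ∑ k ∈ s, f k y) x = ∑ k ∈ s, pd i (f k) x := by
  unfold pd
  rw [fderiv_fun_sum hf]
  simp
lemma diff_prod {ι : Type*} (s : Finset ι) (f : ι → Pt n → ℝ)
    (h : ∀ i, Differentiable ℝ (f i)) :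
    Differentiable ℝ (fun x => ∏ i ∈ s, f i x) := by
  classical
  induction s using Finset.induction with
  | empty => simp only [Finset.prod_empty]; exact differentiable_const (1:ℝ)
  | @insert a s hns ih =>
      have : (fun x => ∏ i ∈ insert a s, f i x) = fun x => f a x * ∏ i ∈ s, f i x := by
        funext x; rw [Finset.prod_insert hns]
      rw [this]; exact (h a).mul ih
lemma diff_det {M : Pt n → Fin n → Fin n → ℝ}
    (hM : ∀ i j, Differentiable ℝ fun x => M x i j) :
    Differentiable ℝ (fun x => (Matrix.of (M x)).det) := by
  have : (fun x => (Matrix.of (M x)).det)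
      = fun x => ∑ σ : Equiv.Perm (Fin n), (Equiv.Perm.sign σ : ℤ) • ∏ i, M x (σ i) i := by
    funext x; rw [Matrix.det_apply]; rfl
  rw [this]
  apply Differentiable.fun_sum
  intro σ _
  have hp : Differentiable ℝ (fun x => ∏ i, M x (σ i) i) :=
    diff_prod Finset.univ _ (fun i => hM (σ i) i)
  simpa [zsmul_eq_mul] using hp.const_mul ((Equiv.Perm.sign σ : ℤ) : ℝ)
lemma inv2_eq (g : T2 n) (x : Pt n) (i j : Fin n) :
    inv2 g x i j = ((Matrix.of (g x)).det)⁻¹ * (Matrix.of (g x)).adjugate i j := by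
  rw [inv2, Matrix.inv_def]
  simp [Ring.inverse_eq_inv']
lemma diff_adj {M : Pt n → Fin n → Fin n → ℝ}
    (hM : ∀ i j, Differentiable ℝ fun x => M x i j) (i j : Fin n) :
    Differentiable ℝ (fun x => (Matrix.of (M x)).adjugate i j) := by
  have h1 : ∀ x, (Matrix.of (M x)).adjugate i j
      = (Matrix.of (fun a b => if a = j then (Pi.single i 1 : Fin n → ℝ) b else M x a b)).det := by
    intro x
    rw [Matrix.adjugate_apply]
    congr 1
    ext a b
    simp [Matrix.updateRow_apply]
  have : (fun x => (Matrix.of (M x)).adjugate i j)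
      = fun x => (Matrix.of (fun a b => if a = j then (Pi.single i 1 : Fin n → ℝ) b else M x a b)).det := by
    funext x; exact h1 x
  rw [this]
  apply diff_det
  intro a b
  by_cases haj : a = j
  · simp [haj]
  · simpa [haj] using hM a b
lemma diff_inv2 {g : T2 n} (hg : ∀ i j, Differentiable ℝ fun x => g x i j)
    (hdet : ∀ x, (Matrix.of (g x)).det ≠ 0) (i j : Fin n) :
    Differentiable ℝ (fun x => inv2 g x i j) := by
  have : (fun x => inv2 g x i j)
      = fun x => ((Matrix.of (g x)).det)⁻¹ * (Matrix.of (g x)).adjugate i j := by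
    funext x; exact inv2_eq g x i j
  rw [this]
  exact ((diff_det hg).inv hdet).mul (diff_adj hg i j)
lemma diff_trK {g K : T2 n} (hg : ∀ i j, Differentiable ℝ fun x => g x i j)
    (hdet : ∀ x, (Matrix.of (g x)).det ≠ 0)
    (hK : ∀ i j, Differentiable ℝ fun x => K x i j) :
    Differentiable ℝ (fun x => trK g K x) := by
  apply Differentiable.fun_sum; intro i _
  apply Differentiable.fun_sum; intro j _
  exact (diff_inv2 hg hdet i j).mul (hK i j)
lemma diff_Pmix {g K : T2 n} (hg : ∀ i j, Differentiable ℝ fun x => g x i j)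
    (hdet : ∀ x, (Matrix.of (g x)).det ≠ 0)
    (hK : ∀ i j, Differentiable ℝ fun x => K x i j) (l k : Fin n) :
    Differentiable ℝ (fun x => Pmix g K x l k) := by
  unfold Pmix
  apply Differentiable.sub
  · by_cases hlk : l = k
    · simpa [hlk] using diff_trK hg hdet hK
    · simp only [hlk, if_false]; exact differentiable_const 0
  · exact Differentiable.fun_sum fun m _ => (diff_inv2 hg hdet l m).mul (hK m k)
section MatId
variable {g : T2 n} {x : Pt n}
lemma hGiG (hdet : IsUnit (Matrix.of (g x)).det) (i j : Fin n) :
    ∑ m, inv2 g x i m * g x m j = if i = j then 1 else 0 := by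
  have h := Matrix.nonsing_inv_mul (Matrix.of (g x)) hdet
  have h2 := congrFun (congrFun h i) j
  rw [Matrix.mul_apply, Matrix.one_apply] at h2
  exact h2
lemma hGGi (hdet : IsUnit (Matrix.of (g x)).det) (i j : Fin n) :
    ∑ m, g x i m * inv2 g x m j = if i = j then 1 else 0 := by
  have h := Matrix.mul_nonsing_inv (Matrix.of (g x)) hdet
  have h2 := congrFun (congrFun h i) j
  rw [Matrix.mul_apply, Matrix.one_apply] at h2
  exact h2
lemma hGisymm (hsym : ∀ i j, g x i j = g x j i) (i j : Fin n) :
    inv2 g x i j = inv2 g x j i := by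
  have hT : (Matrix.of (g x)).transpose = Matrix.of (g x) := by
    ext a b; exact hsym b a
  have := Matrix.transpose_nonsing_inv (A := Matrix.of (g x))
  rw [hT] at this
  have h2 := congrFun (congrFun this j) i
  simpa [inv2, Matrix.transpose_apply] using h2
end MatId
section PtAlg
variable {g K : T2 n} {x : Pt n}
lemma Kup_symm (hgs : ∀ i j, g x i j = g x j i) (hKs : ∀ i j, K x i j = K x j i)
    (k l : Fin n) : Kup g K x k l = Kup g K x l k := by
  unfold Kup
  rw [Finset.sum_comm]
  apply Finset.sum_congr rfl; intro a _
  apply Finset.sum_congr rfl; intro b _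
  rw [hKs b a]; ring
lemma Pup_symm (hgs : ∀ i j, g x i j = g x j i) (hKs : ∀ i j, K x i j = K x j i)
    (k l : Fin n) : Pup g K x k l = Pup g K x l k := by
  unfold Pup
  rw [Kup_symm hgs hKs, hGisymm hgs]
lemma lowerP (hdet : IsUnit (Matrix.of (g x)).det) (hgs : ∀ i j, g x i j = g x j i)
    (k m : Fin n) : ∑ l, Pup g K x k l * g x l m = Pmix g K x k m := by
  unfold Pup Pmix
  have h0 : ∀ l, (inv2 g x k l * trK g K x - Kup g K x k l) * g x l m
      = inv2 g x k l * trK g K x * g x l m - Kup g K x k l * g x l m := by intro l; ring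
  rw [Finset.sum_congr rfl (fun l _ => h0 l), Finset.sum_sub_distrib]
  congr 1
  · have h1 : ∀ l, inv2 g x k l * trK g K x * g x l m
        = trK g K x * (inv2 g x k l * g x l m) := by intro l; ring
    rw [Finset.sum_congr rfl (fun l _ => h1 l), ← Finset.mul_sum, hGiG hdet k m]
    by_cases h : k = m <;> simp [h]
  · unfold Kup
    have h1 : ∀ l, (∑ a, ∑ b, inv2 g x k a * inv2 g x l b * K x a b) * g x l m
        = ∑ a, ∑ b, inv2 g x k a * K x a b * (inv2 g x b l * g x l m) := by
      intro l
      rw [Finset.sum_mul]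
      apply Finset.sum_congr rfl; intro a _
      rw [Finset.sum_mul]
      apply Finset.sum_congr rfl; intro b _
      rw [hGisymm hgs l b]; ring
    rw [Finset.sum_congr rfl (fun l _ => h1 l), Finset.sum_comm]
    apply Finset.sum_congr rfl; intro a _
    rw [Finset.sum_comm]
    have h2 : ∀ b, ∑ l, inv2 g x k a * K x a b * (inv2 g x b l * g x l m)
        = inv2 g x k a * K x a b * (if b = m then 1 else 0) := by
      intro b
      rw [← Finset.mul_sum, hGiG hdet b m]
    rw [Finset.sum_congr rfl (fun b _ => h2 b)]
    simp [Finset.sum_ite_eq']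
lemma lowchr (hdet : IsUnit (Matrix.of (g x)).det) (a l k : Fin n) :
    ∑ m, g x a m * chr g m l k x
      = (1/2) * (pd l (fun y => g y a k) x + pd k (fun y => g y a l) x
          - pd a (fun y => g y l k) x) := by
  unfold chr
  have h1 : ∀ m, g x a m * ((1/2 : ℝ) * ∑ b, inv2 g x m b *
      (pd l (fun y => g y b k) x + pd k (fun y => g y b l) x - pd b (fun y => g y l k) x))
      = (1/2) * ∑ b, (g x a m * inv2 g x m b) *
      (pd l (fun y => g y b k) x + pd k (fun y => g y b l) x - pd b (fun y => g y l k) x) := by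
    intro m
    simp only [Finset.mul_sum]
    apply Finset.sum_congr rfl; intro b _; ring
  rw [Finset.sum_congr rfl (fun m _ => h1 m), ← Finset.mul_sum, Finset.sum_comm]
  congr 1
  have h2 : ∀ b, ∑ m, (g x a m * inv2 g x m b) *
      (pd l (fun y => g y b k) x + pd k (fun y => g y b l) x - pd b (fun y => g y l k) x)
      = (if a = b then 1 else 0) *
      (pd l (fun y => g y b k) x + pd k (fun y => g y b l) x - pd b (fun y => g y l k) x) := by
    intro b
    rw [← Finset.sum_mul, hGGi hdet a b]
  rw [Finset.sum_congr rfl (fun b _ => h2 b)]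
  simp [Finset.sum_ite_eq]
end PtAlg
lemma sum3_rot (t : Fin n → Fin n → Fin n → ℝ) :
    ∑ k, ∑ l, ∑ m, t k l m = ∑ m, ∑ k, ∑ l, t k l m := by
  calc ∑ k, ∑ l, ∑ m, t k l m = ∑ k, ∑ m, ∑ l, t k l m :=
        Finset.sum_congr rfl fun k _ => Finset.sum_comm
    _ = ∑ m, ∑ k, ∑ l, t k l m := Finset.sum_comm
lemma lieAddE {g b : T2 n} {Y : Vec n}
    (hgd : ∀ i j, Differentiable ℝ fun y => g y i j)
    (hbd : ∀ i j, Differentiable ℝ fun y => b y i j) (x : Pt n) (k l : Fin n) :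
    lieLow Y b x k l + lieLow Y (eT g b) x k l = lieLow Y g x k l := by
  unfold lieLow eT
  have h1 : ∀ m : Fin n, pd m (fun y => g y k l - b y k l) x
      = pd m (fun y => g y k l) x - pd m (fun y => b y k l) x :=
    fun m => pd_sub (hgd k l x) (hbd k l x)
  have e1 : (∑ m, Y x m * pd m (fun y => b y k l) x)
      + ∑ m, Y x m * pd m (fun y => g y k l - b y k l) x
      = ∑ m, Y x m * pd m (fun y => g y k l) x := by
    rw [← Finset.sum_add_distrib]
    apply Finset.sum_congr rfl; intro m _; rw [h1 m]; ring
  have e2 : (∑ m, b x m l * pd k (fun y => Y y m) x)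
      + ∑ m, (g x m l - b x m l) * pd k (fun y => Y y m) x
      = ∑ m, g x m l * pd k (fun y => Y y m) x := by
    rw [← Finset.sum_add_distrib]
    apply Finset.sum_congr rfl; intro m _; ring
  have e3 : (∑ m, b x k m * pd l (fun y => Y y m) x)
      + ∑ m, (g x k m - b x k m) * pd l (fun y => Y y m) x
      = ∑ m, g x k m * pd l (fun y => Y y m) x := by
    rw [← Finset.sum_add_distrib]
    apply Finset.sum_congr rfl; intro m _; ring
  linarith [e1, e2, e3]
section Key
variable {g K : T2 n} {Y : Vec n} {x : Pt n}
lemma key (hdet : IsUnit (Matrix.of (g x)).det)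
    (hgsA : ∀ y i j, g y i j = g y j i)
    (hKs : ∀ i j, K x i j = K x j i) :
    ∑ k, ∑ l, Pup g K x k l * lieLow Y g x k l
      = 2 * (∑ l, ∑ k, pd l (fun y => Y y k) x * Pmix g K x l k)
        + 2 * ∑ k, Y x k * ∑ l, ∑ m, chr g m l k x * Pmix g K x l m := by
  have hgs : ∀ i j, g x i j = g x j i := hgsA x
  have hPs : ∀ k l, Pup g K x k l = Pup g K x l k := Pup_symm hgs hKs
  have hlow : ∀ k m, ∑ l, Pup g K x k l * g x l m = Pmix g K x k m := lowerP hdet hgs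
  have hpdG : ∀ (m i j : Fin n), pd m (fun y => g y i j) x = pd m (fun y => g y j i) x :=
    fun m i j => pd_congr (fun y => hgsA y i j) x
  have hsplit : ∑ k, ∑ l, Pup g K x k l * lieLow Y g x k l
      = (∑ k, ∑ l, Pup g K x k l * ∑ m, Y x m * pd m (fun y => g y k l) x)
        + ((∑ k, ∑ l, Pup g K x k l * ∑ m, g x m l * pd k (fun y => Y y m) x)
        + ∑ k, ∑ l, Pup g K x k l * ∑ m, g x k m * pd l (fun y => Y y m) x) := by
    rw [← Finset.sum_add_distrib, ← Finset.sum_add_distrib]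
    apply Finset.sum_congr rfl; intro k _
    rw [← Finset.sum_add_distrib, ← Finset.sum_add_distrib]
    apply Finset.sum_congr rfl; intro l _
    unfold lieLow; ring
  have hB2 : (∑ k, ∑ l, Pup g K x k l * ∑ m, g x m l * pd k (fun y => Y y m) x)
      = ∑ l, ∑ k, pd l (fun y => Y y k) x * Pmix g K x l k := by
    apply Finset.sum_congr rfl; intro k _
    have s1 : ∀ l, Pup g K x k l * ∑ m, g x m l * pd k (fun y => Y y m) x
        = ∑ m, Pup g K x k l * (g x m l * pd k (fun y => Y y m) x) := by
      intro l; rw [Finset.mul_sum]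
    rw [Finset.sum_congr rfl fun l _ => s1 l, Finset.sum_comm]
    apply Finset.sum_congr rfl; intro m _
    have s2 : ∀ l, Pup g K x k l * (g x m l * pd k (fun y => Y y m) x)
        = Pup g K x k l * g x l m * pd k (fun y => Y y m) x := by
      intro l; rw [hgs m l]; ring
    rw [Finset.sum_congr rfl fun l _ => s2 l, ← Finset.sum_mul, hlow k m]
    ring
  have hB3 : (∑ k, ∑ l, Pup g K x k l * ∑ m, g x k m * pd l (fun y => Y y m) x)
      = ∑ l, ∑ k, pd l (fun y => Y y k) x * Pmix g K x l k := by
    rw [Finset.sum_comm]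
    apply Finset.sum_congr rfl; intro l _
    have s1 : ∀ k, Pup g K x k l * ∑ m, g x k m * pd l (fun y => Y y m) x
        = ∑ m, Pup g K x l k * g x k m * pd l (fun y => Y y m) x := by
      intro k; rw [Finset.mul_sum]
      apply Finset.sum_congr rfl; intro m _; rw [hPs k l]; ring
    rw [Finset.sum_congr rfl fun k _ => s1 k, Finset.sum_comm]
    apply Finset.sum_congr rfl; intro m _
    rw [← Finset.sum_mul, hlow l m]
    ring
  have hcan : ∀ k : Fin n,
      ∑ l, ∑ a, Y x k * (Pup g K x l a * pd l (fun y => g y a k) x)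
        = ∑ l, ∑ a, Y x k * (Pup g K x l a * pd a (fun y => g y l k) x) := by
    intro k
    rw [Finset.sum_comm]
    apply Finset.sum_congr rfl; intro i _
    apply Finset.sum_congr rfl; intro j _
    rw [hPs j i]
  have hRk : ∀ k : Fin n,
      2 * (Y x k * ∑ l, ∑ m, chr g m l k x * Pmix g K x l m)
        = ∑ l, ∑ a, Y x k * (Pup g K x l a * pd k (fun y => g y a l) x) := by
    intro k
    have h1 : ∀ l, ∑ m, chr g m l k x * Pmix g K x l m
        = ∑ a, Pup g K x l a * ((1/2) * (pd l (fun y => g y a k) x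
            + pd k (fun y => g y a l) x - pd a (fun y => g y l k) x)) := by
      intro l
      have p1 : ∀ m, chr g m l k x * Pmix g K x l m
          = ∑ a, Pup g K x l a * (g x a m * chr g m l k x) := by
        intro m
        rw [← hlow l m, Finset.mul_sum]
        apply Finset.sum_congr rfl; intro a _; ring
      rw [Finset.sum_congr rfl fun m _ => p1 m, Finset.sum_comm]
      apply Finset.sum_congr rfl; intro a _
      rw [← Finset.mul_sum, lowchr hdet a l k]
    rw [Finset.sum_congr rfl fun l _ => h1 l]
    calc 2 * (Y x k * ∑ l, ∑ a, Pup g K x l a * ((1/2) * (pd l (fun y => g y a k) x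
            + pd k (fun y => g y a l) x - pd a (fun y => g y l k) x)))
        = ∑ l, ∑ a, (Y x k * (Pup g K x l a * pd l (fun y => g y a k) x)
            + Y x k * (Pup g K x l a * pd k (fun y => g y a l) x)
            - Y x k * (Pup g K x l a * pd a (fun y => g y l k) x)) := by
          simp only [Finset.mul_sum]
          apply Finset.sum_congr rfl; intro l _
          apply Finset.sum_congr rfl; intro a _
          ring
      _ = (∑ l, ∑ a, Y x k * (Pup g K x l a * pd l (fun y => g y a k) x))
            + (∑ l, ∑ a, Y x k * (Pup g K x l a * pd k (fun y => g y a l) x))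
            - ∑ l, ∑ a, Y x k * (Pup g K x l a * pd a (fun y => g y l k) x) := by
          simp only [Finset.sum_add_distrib, Finset.sum_sub_distrib]
      _ = ∑ l, ∑ a, Y x k * (Pup g K x l a * pd k (fun y => g y a l) x) := by
          rw [hcan k]; ring
  have hB1 : (∑ k, ∑ l, Pup g K x k l * ∑ m, Y x m * pd m (fun y => g y k l) x)
      = 2 * ∑ k, Y x k * ∑ l, ∑ m, chr g m l k x * Pmix g K x l m := by
    rw [Finset.mul_sum]
    rw [Finset.sum_congr rfl fun k (_ : k ∈ Finset.univ) => hRk k]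
    have step1 : (∑ k, ∑ l, Pup g K x k l * ∑ m, Y x m * pd m (fun y => g y k l) x)
        = ∑ k, ∑ l, ∑ m, Y x m * (Pup g K x k l * pd m (fun y => g y l k) x) := by
      apply Finset.sum_congr rfl; intro k _
      apply Finset.sum_congr rfl; intro l _
      rw [Finset.mul_sum]
      apply Finset.sum_congr rfl; intro m _
      rw [hpdG m k l]; ring
    rw [step1, sum3_rot]
  rw [hsplit, hB2, hB3, hB1]
  ring
end Key

/-- the divergence identity (divYPg):
`2 D_l(Y^k P^l{}_k) = P^{kl} Å_{kl} + Y^k J_k(g,K) + P^{kl}(2V K̊_{kl} + (L_Y e)_{kl})`. -/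
theorem divergence_identity_YP
    (n : ℕ) (g b K Kr : T2 n) (V : Pt n → ℝ) (Y : Vec n)
    (hg : ∀ i j, ContDiff ℝ (⊤ : ℕ∞) fun x => g x i j)
    (hb : ∀ i j, ContDiff ℝ (⊤ : ℕ∞) fun x => b x i j)
    (hK : ∀ i j, ContDiff ℝ (⊤ : ℕ∞) fun x => K x i j)
    (hKr : ∀ i j, ContDiff ℝ (⊤ : ℕ∞) fun x => Kr x i j)
    (hV : ContDiff ℝ (⊤ : ℕ∞) V) (hY : ∀ m, ContDiff ℝ (⊤ : ℕ∞) fun x => Y x m)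
    (hgsymm : ∀ x i j, g x i j = g x j i)
    (hbsymm : ∀ x i j, b x i j = b x j i)
    (hKsymm : ∀ x i j, K x i j = K x j i)
    (hKrsymm : ∀ x i j, Kr x i j = Kr x j i)
    (hgpos : ∀ x, (Matrix.of (g x)).PosDef) :
    ∀ x : Pt n,
      2 * divg g (fun y l => ∑ k, Y y k * Pmix g K y l k) x
        = (∑ k, ∑ l, Pup g K x k l * Aring b Kr V Y x k l)
          + (∑ k, Y x k * Jlow g K k x)
          + ∑ k, ∑ l, Pup g K x k l
              * (2 * V x * Kr x k l + lieLow Y (eT g b) x k l) := by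
  intro x
  have hdetne : ∀ y, (Matrix.of (g y)).det ≠ 0 := fun y => ne_of_gt (hgpos y).det_pos
  have hdetU : ∀ y, IsUnit (Matrix.of (g y)).det :=
    fun y => isUnit_iff_ne_zero.mpr (hdetne y)
  have hgd : ∀ i j, Differentiable ℝ fun y => g y i j :=
    fun i j => (hg i j).differentiable (by simp)
  have hbd : ∀ i j, Differentiable ℝ fun y => b y i j :=
    fun i j => (hb i j).differentiable (by simp)
  have hKd : ∀ i j, Differentiable ℝ fun y => K y i j :=
    fun i j => (hK i j).differentiable (by simp)
  have hYd : ∀ m, Differentiable ℝ fun y => Y y m :=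
    fun m => (hY m).differentiable (by simp)
  have hPmixd : ∀ l k, Differentiable ℝ fun y => Pmix g K y l k :=
    fun l k => diff_Pmix hgd hdetne hKd l k
  -- expand the divergence's derivative term
  have hpdZ : ∀ l, pd l (fun y => ∑ k, Y y k * Pmix g K y l k) x
      = ∑ k, (pd l (fun y => Y y k) x * Pmix g K x l k
          + Y x k * pd l (fun y => Pmix g K y l k) x) := by
    intro l
    rw [pd_sum (f := fun k y => Y y k * Pmix g K y l k) (fun k _ => ((hYd k x).mul (hPmixd l k x)))]
    apply Finset.sum_congr rfl; intro k _
    exact pd_mul (hYd k x) (hPmixd l k x)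
  -- combine the two double sums on the right
  have hcomb : (∑ k, ∑ l, Pup g K x k l * Aring b Kr V Y x k l)
      + (∑ k, ∑ l, Pup g K x k l * (2 * V x * Kr x k l + lieLow Y (eT g b) x k l))
      = ∑ k, ∑ l, Pup g K x k l * lieLow Y g x k l := by
    rw [← Finset.sum_add_distrib]
    apply Finset.sum_congr rfl; intro k _
    rw [← Finset.sum_add_distrib]
    apply Finset.sum_congr rfl; intro l _
    have hla := lieAddE (Y := Y) hgd hbd x k l
    unfold Aring
    linear_combination hla * Pup g K x k l
  rw [add_right_comm, hcomb]
  simp only [divg, Jlow]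
  rw [Finset.sum_congr rfl fun l (_ : l ∈ Finset.univ) => hpdZ l]
  have E1 : ∑ l, ∑ k, (pd l (fun y => Y y k) x * Pmix g K x l k
        + Y x k * pd l (fun y => Pmix g K y l k) x)
      = (∑ l, ∑ k, pd l (fun y => Y y k) x * Pmix g K x l k)
        + ∑ k, Y x k * ∑ l, pd l (fun y => Pmix g K y l k) x := by
    simp only [Finset.sum_add_distrib]
    congr 1
    rw [Finset.sum_comm]
    apply Finset.sum_congr rfl; intro k _
    rw [Finset.mul_sum]
  have E2 : ∑ l, ∑ m, chr g l l m x * ∑ k, Y x k * Pmix g K x m k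
      = ∑ k, Y x k * ∑ l, ∑ m, chr g l l m x * Pmix g K x m k := by
    calc ∑ l, ∑ m, chr g l l m x * ∑ k, Y x k * Pmix g K x m k
        = ∑ l, ∑ m, ∑ k, Y x k * (chr g l l m x * Pmix g K x m k) := by
          apply Finset.sum_congr rfl; intro l _
          apply Finset.sum_congr rfl; intro m _
          rw [Finset.mul_sum]
          apply Finset.sum_congr rfl; intro k _; ring
      _ = ∑ k, ∑ l, ∑ m, Y x k * (chr g l l m x * Pmix g K x m k) := sum3_rot _
      _ = ∑ k, Y x k * ∑ l, ∑ m, chr g l l m x * Pmix g K x m k := by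
          apply Finset.sum_congr rfl; intro k _
          rw [Finset.mul_sum]
          apply Finset.sum_congr rfl; intro l _
          rw [Finset.mul_sum]
  rw [E1, E2, key (hdetU x) hgsymm (hKsymm x)]
  have E3 : ∑ k, Y x k * (2 * ((∑ l, pd l (fun y => Pmix g K y l k) x)
        + (∑ l, ∑ m, chr g l l m x * Pmix g K x m k)
        - ∑ l, ∑ m, chr g m l k x * Pmix g K x l m))
      = 2 * (∑ k, Y x k * ∑ l, pd l (fun y => Pmix g K y l k) x)
        + 2 * (∑ k, Y x k * ∑ l, ∑ m, chr g l l m x * Pmix g K x m k)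
        - 2 * ∑ k, Y x k * ∑ l, ∑ m, chr g m l k x * Pmix g K x l m := by
    calc ∑ k, Y x k * (2 * ((∑ l, pd l (fun y => Pmix g K y l k) x)
          + (∑ l, ∑ m, chr g l l m x * Pmix g K x m k)
          - ∑ l, ∑ m, chr g m l k x * Pmix g K x l m))
        = ∑ k, (2 * (Y x k * ∑ l, pd l (fun y => Pmix g K y l k) x)
          + 2 * (Y x k * ∑ l, ∑ m, chr g l l m x * Pmix g K x m k)
          - 2 * (Y x k * ∑ l, ∑ m, chr g m l k x * Pmix g K x l m)) := by
          apply Finset.sum_congr rfl; intro k _; ring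
      _ = _ := by
          rw [Finset.sum_sub_distrib, Finset.sum_add_distrib,
            ← Finset.mul_sum, ← Finset.mul_sum, ← Finset.mul_sum]
  rw [E3]
  ring
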